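/- Let a₁, a₂ ∈ ℝ, 0 < α₁ < α₂, and let κ₁, κ₂ ∈ ℝ be arbitrary. Let σ ∈ (α₁/α₂, 1), δ ∈ (0,1), D > max(1, (α₂ + 2|a₂|)(1−σ)) and C₃ > 0. Define φ₃(x,y) = C₃((Dx² + y²)/|y|^{2σ})^δ on U₃ = {(x,y) : x < −1/2 and |y| > 1}. Then φ₃ is a Lyapunov function for L on U₃. -/

import Mathlib

noncomputable def Lop (a₁ a₂ α₁ α₂ κ₁ κ₂ : ℝ) (Φ : ℝ × ℝ → ℝ) (p : ℝ × ℝ) : ℝ :=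
  (a₁ * p.1 - α₁ * p.1 ^ 2 + p.2 ^ 2) * deriv (fun t => Φ (t, p.2)) p.1
    + (a₂ * p.2 - α₂ * p.1 * p.2) * deriv (fun t => Φ (p.1, t)) p.2
    + κ₁ * deriv (deriv (fun t => Φ (t, p.2))) p.1
    + κ₂ * deriv (deriv (fun t => Φ (p.1, t))) p.2

/-- `φ` is a Lyapunov function for the operator `L` (with the given parameters) on `U`:
(I) `φ` is `C^∞` on `U`; (II) `φ z → ∞` as `|z| → ∞`, `z ∈ U`;
(III) there are `C, D > 0` with `Lφ ≤ -C•φ + D` on `U`. -/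
def IsLyapunovOn (a₁ a₂ α₁ α₂ κ₁ κ₂ : ℝ) (φ : ℝ × ℝ → ℝ) (U : Set (ℝ × ℝ)) : Prop :=
  ContDiffOn ℝ (⊤ : ℕ∞) φ U ∧
    (∀ M : ℝ, ∃ R : ℝ, ∀ z ∈ U, R < ‖z‖ → M < φ z) ∧
    (∃ C > (0:ℝ), ∃ D > (0:ℝ), ∀ z ∈ U, Lop a₁ a₂ α₁ α₂ κ₁ κ₂ φ z ≤ -C * φ z + D)
noncomputable def phi3 (C₃ Dc σ δ : ℝ) (p : ℝ × ℝ) : ℝ :=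
  C₃ * ((Dc * p.1 ^ 2 + p.2 ^ 2) / |p.2| ^ (2 * σ)) ^ δ

def U3 : Set (ℝ × ℝ) := {p : ℝ × ℝ | p.1 < -1/2 ∧ 1 < |p.2|}

/-! Off the axis `y = 0` we have `φ₃ = C₃ exp ψ` with `ψ = δ (log u - σ log v)`, `u = D x² + y²`,
`v = y²`, so `Lφ₃ = φ₃ · (drift · ∇ψ + κ₁ (ψ_x² + ψ_xx) + κ₂ (ψ_y² + ψ_yy))`, and this factor is
`2δ N / (u² v)` for a polynomial `N`. On `U₃` the drift part of `N` is `u v` times at most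
`-D (σ α₂ - α₁) |x|³ + O(x²) - (ε/2) v` with `ε = D - (α₂ + 2|a₂|)(1 - σ) > 0`: this is where
`σ > α₁/α₂`, `x < -1/2` and the bound on `D` enter. The diffusion part is `O(u²)`, so
`N ≤ u (R - ε' u v)`, hence `Lφ₃ ≤ -2δε' φ₃ + 2δR φ₃ / (u v) ≤ -2δε' φ₃ + 2δR C₃`.
Coercivity follows from `φ₃ ≥ C₃ u^((1-σ)δ) ≥ C₃ ‖z‖^(2(1-σ)δ)`. -/

open Real Filter Topology

theorem snd_ne_zero_of_mem_U3 {p : ℝ × ℝ} (hp : p ∈ U3) : p.2 ≠ 0 :=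
  abs_pos.1 (one_pos.trans hp.2)

section ExpDeriv

variable {f ψ ψ' : ℝ → ℝ} {c x ψ'' : ℝ}

theorem deriv_eq_mul_of_eventuallyEq_exp {a : ℝ} (hf : f =ᶠ[𝓝 x] fun t => c * exp (ψ t))
    (hψ : HasDerivAt ψ a x) : deriv f x = f x * a := by
  rw [hf.deriv_eq, (hψ.exp.const_mul c).deriv, hf.eq_of_nhds, mul_assoc]

theorem deriv_deriv_eq_mul_of_eventuallyEq_exp (hf : f =ᶠ[𝓝 x] fun t => c * exp (ψ t))
    (hψ : ∀ᶠ t in 𝓝 x, HasDerivAt ψ (ψ' t) t) (hψ' : HasDerivAt ψ' ψ'' x) :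
    deriv (deriv f) x = f x * (ψ' x ^ 2 + ψ'') := by
  have hderiv : deriv f =ᶠ[𝓝 x] fun t => c * exp (ψ t) * ψ' t := by
    filter_upwards [hf.eventuallyEq_nhds, hψ] with t hft hψt
    exact deriv_eq_mul_of_eventuallyEq_exp hft hψt |>.trans (by rw [hft.eq_of_nhds])
  have h : HasDerivAt (fun t => c * exp (ψ t) * ψ' t)
      (c * (exp (ψ x) * ψ' x) * ψ' x + c * exp (ψ x) * ψ'') x :=
    (hψ.self_of_nhds.exp.const_mul c).mul hψ'
  rw [hderiv.deriv_eq, h.deriv, hf.eq_of_nhds]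
  ring

end ExpDeriv

noncomputable def logPhi3 (Dc σ δ : ℝ) (p : ℝ × ℝ) : ℝ :=
  δ * (log (Dc * p.1 ^ 2 + p.2 ^ 2) - σ * log (p.2 ^ 2))

theorem phi3_eq_exp {C₃ Dc σ δ : ℝ} (hDc : 0 ≤ Dc) {p : ℝ × ℝ} (hy : p.2 ≠ 0) :
    phi3 C₃ Dc σ δ p = C₃ * exp (logPhi3 Dc σ δ p) := by
  have hu : 0 < Dc * p.1 ^ 2 + p.2 ^ 2 := by positivity
  have hden : 0 < |p.2| ^ (2 * σ) := by positivity
  rw [phi3, logPhi3, rpow_def_of_pos (div_pos hu hden), log_div hu.ne' hden.ne',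
    log_rpow (abs_pos.mpr hy), ← log_abs (p.2 ^ 2), abs_pow, log_pow]
  push_cast
  ring_nf

theorem contDiffOn_phi3 (C₃ : ℝ) {Dc : ℝ} (hDc : 0 ≤ Dc) (σ δ : ℝ) :
    ContDiffOn ℝ (⊤ : ℕ∞) (phi3 C₃ Dc σ δ) {p | p.2 ≠ 0} := by
  have hpoly : ContDiff ℝ (⊤ : ℕ∞) fun p : ℝ × ℝ => Dc * p.1 ^ 2 + p.2 ^ 2 := by fun_prop
  have hsq : ContDiff ℝ (⊤ : ℕ∞) fun p : ℝ × ℝ => p.2 ^ 2 := by fun_prop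
  have hlog : ContDiffOn ℝ (⊤ : ℕ∞) (logPhi3 Dc σ δ) {p | p.2 ≠ 0} :=
    contDiffOn_const.mul ((hpoly.contDiffOn.log fun p (hp : p.2 ≠ 0) => by positivity).sub
      (contDiffOn_const.mul (hsq.contDiffOn.log fun p (hp : p.2 ≠ 0) => by positivity)))
  exact (contDiffOn_const.mul hlog.exp).congr fun p hp => phi3_eq_exp hDc hp

section Slices

variable {Dc σ δ : ℝ}

theorem hasDerivAt_logPhi3_fst (hDc : 0 ≤ Dc) {y : ℝ} (hy : y ≠ 0) (t : ℝ) :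
    HasDerivAt (fun t => logPhi3 Dc σ δ (t, y)) (2 * Dc * δ * t / (Dc * t ^ 2 + y ^ 2)) t := by
  have hu : Dc * t ^ 2 + y ^ 2 ≠ 0 := by positivity
  have h := ((((hasDerivAt_pow 2 t).const_mul Dc).add_const (y ^ 2)).log hu).sub_const
    (σ * log (y ^ 2)) |>.const_mul δ
  exact h.congr_deriv (by norm_num; ring)

theorem hasDerivAt_logPhi3_snd (hDc : 0 ≤ Dc) (x : ℝ) {s : ℝ} (hs : s ≠ 0) :
    HasDerivAt (fun s => logPhi3 Dc σ δ (x, s))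
      (2 * δ * (s / (Dc * x ^ 2 + s ^ 2) - σ / s)) s := by
  have hu : Dc * x ^ 2 + s ^ 2 ≠ 0 := by positivity
  have h := (((hasDerivAt_pow 2 s).const_add (Dc * x ^ 2)).log hu).sub
    (((hasDerivAt_pow 2 s).log (pow_ne_zero 2 hs)).const_mul σ) |>.const_mul δ
  exact h.congr_deriv (by field_simp; ring)

end Slices

noncomputable def phi3Numerator (a₁ a₂ α₁ α₂ κ₁ κ₂ Dc σ δ x v : ℝ) : ℝ :=
  let u := Dc * x ^ 2 + v
  u * v * (Dc * x * (a₁ * x - α₁ * x ^ 2 + v) + (a₂ - α₂ * x) * (v - σ * u))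
    + κ₁ * (Dc * v * (v + (2 * δ - 1) * (Dc * x ^ 2)))
    + κ₂ * (2 * δ * (v - σ * u) ^ 2 + u * v - 2 * v ^ 2 + σ * u ^ 2)

theorem Lop_phi3 (a₁ a₂ α₁ α₂ κ₁ κ₂ C₃ : ℝ) {Dc : ℝ} (hDc : 0 ≤ Dc) (σ δ x : ℝ) {y : ℝ}
    (hy : y ≠ 0) :
    Lop a₁ a₂ α₁ α₂ κ₁ κ₂ (phi3 C₃ Dc σ δ) (x, y) = phi3 C₃ Dc σ δ (x, y) *
      (2 * δ * phi3Numerator a₁ a₂ α₁ α₂ κ₁ κ₂ Dc σ δ x (y ^ 2)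
        / ((Dc * x ^ 2 + y ^ 2) ^ 2 * y ^ 2)) := by
  have hu : Dc * x ^ 2 + y ^ 2 ≠ 0 := by positivity
  have hfst : (fun t => phi3 C₃ Dc σ δ (t, y)) =ᶠ[𝓝 x]
      fun t => C₃ * exp (logPhi3 Dc σ δ (t, y)) :=
    Eventually.of_forall fun t => phi3_eq_exp hDc hy
  have hsnd : (fun s => phi3 C₃ Dc σ δ (x, s)) =ᶠ[𝓝 y]
      fun s => C₃ * exp (logPhi3 Dc σ δ (x, s)) :=
    (eventually_ne_nhds hy).mono fun s hs => phi3_eq_exp hDc hs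
  have hψsnd : ∀ᶠ s in 𝓝 y, HasDerivAt (fun s => logPhi3 Dc σ δ (x, s))
      (2 * δ * (s / (Dc * x ^ 2 + s ^ 2) - σ / s)) s :=
    (eventually_ne_nhds hy).mono fun s hs => hasDerivAt_logPhi3_snd hDc x hs
  have hψfst' : HasDerivAt (fun t => 2 * Dc * δ * t / (Dc * t ^ 2 + y ^ 2))
      (2 * Dc * δ * (y ^ 2 - Dc * x ^ 2) / (Dc * x ^ 2 + y ^ 2) ^ 2) x :=
    ((hasDerivAt_id' x).const_mul (2 * Dc * δ)).div
      (((hasDerivAt_pow 2 x).const_mul Dc).add_const (y ^ 2)) hu |>.congr_deriv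
      (by field_simp; ring)
  have hψsnd' : HasDerivAt (fun s => 2 * δ * (s / (Dc * x ^ 2 + s ^ 2) - σ / s))
      (2 * δ * ((Dc * x ^ 2 - y ^ 2) / (Dc * x ^ 2 + y ^ 2) ^ 2 + σ / y ^ 2)) y :=
    ((hasDerivAt_id' y).div ((hasDerivAt_pow 2 y).const_add (Dc * x ^ 2)) hu).sub
      ((hasDerivAt_const y σ).div (hasDerivAt_id' y) hy) |>.const_mul (2 * δ) |>.congr_deriv
      (by field_simp; ring)
  simp only [Lop]
  rw [deriv_eq_mul_of_eventuallyEq_exp hfst (hasDerivAt_logPhi3_fst hDc hy x),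
    deriv_deriv_eq_mul_of_eventuallyEq_exp hfst
      (Eventually.of_forall (hasDerivAt_logPhi3_fst hDc hy)) hψfst',
    deriv_eq_mul_of_eventuallyEq_exp hsnd hψsnd.self_of_nhds,
    deriv_deriv_eq_mul_of_eventuallyEq_exp hsnd hψsnd hψsnd', phi3Numerator]
  field_simp
  ring

theorem drift_numerator_le {a₁ a₂ α₁ α₂ Dc σ x v : ℝ} (hDc : 0 ≤ Dc) (hσ₀ : 0 ≤ σ)
    (hσ₁ : σ ≤ 1) (hε : (α₂ + 2 * |a₂|) * (1 - σ) ≤ Dc) (hx : x ≤ -1 / 2) (hv : 0 ≤ v) :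
    Dc * x * (a₁ * x - α₁ * x ^ 2 + v) + (a₂ - α₂ * x) * (v - σ * (Dc * x ^ 2 + v))
      ≤ Dc * (σ * α₂ - α₁) * x ^ 3 + Dc * (|a₁| + |a₂|) * x ^ 2
        - (Dc - (α₂ + 2 * |a₂|) * (1 - σ)) / 2 * v := by
  have hquad : Dc * (a₁ - σ * a₂) * x ^ 2 ≤ Dc * (|a₁| + |a₂|) * x ^ 2 := by
    have : a₁ - σ * a₂ ≤ |a₁| + |a₂| := by
      nlinarith [le_abs_self a₁, neg_abs_le a₂, abs_nonneg a₂]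
    gcongr
  have hlin : (Dc - (1 - σ) * α₂) * (x * v) + (1 - σ) * a₂ * v
      ≤ -((Dc - (α₂ + 2 * |a₂|) * (1 - σ)) / 2 * v) := by
    have hw : 2 * (1 - σ) * |a₂| ≤ Dc - (1 - σ) * α₂ := by linarith
    have hw₀ : 0 ≤ Dc - (1 - σ) * α₂ := by nlinarith [abs_nonneg a₂]
    nlinarith [mul_nonneg (mul_nonneg hw₀ hv) (by linarith : 0 ≤ -1 / 2 - x),
      mul_nonneg (mul_nonneg (by linarith : 0 ≤ 1 - σ) (sub_nonneg.2 (le_abs_self a₂))) hv]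
  linear_combination hquad + hlin

theorem exists_cubic_le_of_nonpos {β : ℝ} (hβ : 0 < β) (M : ℝ) :
    ∃ C, ∀ x ≤ (0 : ℝ), β * x ^ 3 + M * x ^ 2 ≤ C := by
  refine ⟨|M| ^ 3 / β ^ 2, fun x hx => ?_⟩
  rw [le_div_iff₀ (by positivity)]
  have hβx : β * x ≤ 0 := mul_nonpos_of_nonneg_of_nonpos hβ.le hx
  have hM : M * x ^ 2 ≤ |M| * x ^ 2 := by gcongr; exact le_abs_self M
  rcases le_or_gt (|M| + β * x) 0 with h | h
  · nlinarith [mul_nonpos_of_nonneg_of_nonpos (sq_nonneg (β * x)) h,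
      pow_nonneg (abs_nonneg M) 3]
  · have hsq : (β * x) ^ 2 ≤ |M| ^ 2 := by nlinarith
    nlinarith [mul_le_mul hsq (by nlinarith : |M| + β * x ≤ |M|) h.le (sq_nonneg |M|)]

theorem exists_mul_sub_sq_le {ε : ℝ} (hε : 0 < ε) (b : ℝ) :
    ∃ R, ∀ v : ℝ, b * v - ε * v ^ 2 ≤ R := by
  refine ⟨b ^ 2 / (4 * ε), fun v => ?_⟩
  rw [le_div_iff₀ (by positivity)]
  nlinarith [sq_nonneg (2 * ε * v - b)]

theorem diffusion_numerator_le {κ₁ κ₂ Dc σ δ w v : ℝ} (hDc : 0 ≤ Dc) (hσ₀ : 0 ≤ σ)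
    (hσ₁ : σ ≤ 1) (hδ₀ : 0 ≤ δ) (hδ₁ : δ ≤ 1) (hw : 0 ≤ w) (hv : 0 ≤ v) :
    κ₁ * (Dc * v * (v + (2 * δ - 1) * w))
      + κ₂ * (2 * δ * (v - σ * (w + v)) ^ 2 + (w + v) * v - 2 * v ^ 2 + σ * (w + v) ^ 2)
      ≤ (Dc * |κ₁| + 4 * |κ₂|) * (w + v) ^ 2 := by
  have mul_le_abs_mul {κ A c : ℝ} (h : |A| ≤ c) : κ * A ≤ |κ| * c :=
    (le_abs_self _).trans (abs_mul κ A ▸ mul_le_mul_of_nonneg_left h (abs_nonneg κ))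
  have h₁ : |Dc * v * (v + (2 * δ - 1) * w)| ≤ Dc * (w + v) ^ 2 := by
    have hfac : |v + (2 * δ - 1) * w| ≤ w + v := abs_le.2 ⟨by nlinarith, by nlinarith⟩
    rw [abs_mul, abs_of_nonneg (by positivity : 0 ≤ Dc * v)]
    nlinarith [mul_le_mul_of_nonneg_left hfac (by positivity : 0 ≤ Dc * v),
      mul_nonneg hDc (mul_nonneg hw (by positivity : 0 ≤ w + v))]
  have h₂ : |2 * δ * (v - σ * (w + v)) ^ 2 + (w + v) * v - 2 * v ^ 2 + σ * (w + v) ^ 2|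
      ≤ 4 * (w + v) ^ 2 := by
    have hsq : (v - σ * (w + v)) ^ 2 ≤ (w + v) ^ 2 :=
      sq_le_sq' (by nlinarith) (by nlinarith)
    refine abs_le.2 ⟨?_, ?_⟩ <;>
      nlinarith [mul_nonneg hδ₀ (sq_nonneg (v - σ * (w + v))),
        mul_le_mul_of_nonneg_left hsq hδ₀, mul_nonneg hσ₀ (sq_nonneg (w + v)),
        mul_le_mul_of_nonneg_right hσ₁ (sq_nonneg (w + v))]
  nlinarith [mul_le_abs_mul (κ := κ₁) h₁, mul_le_abs_mul (κ := κ₂) h₂]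

theorem exists_phi3Numerator_le (a₁ a₂ κ₁ κ₂ : ℝ) {α₁ α₂ Dc σ δ : ℝ} (hDc : 0 < Dc)
    (hα : α₁ < σ * α₂) (hσ₀ : 0 ≤ σ) (hσ₁ : σ ≤ 1) (hδ₀ : 0 ≤ δ) (hδ₁ : δ ≤ 1)
    (hε : (α₂ + 2 * |a₂|) * (1 - σ) < Dc) :
    ∃ ε > 0, ∃ R ≥ 0, ∀ x ≤ (-1 / 2 : ℝ), ∀ v ≥ (1 : ℝ),
      phi3Numerator a₁ a₂ α₁ α₂ κ₁ κ₂ Dc σ δ x v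
        ≤ (Dc * x ^ 2 + v) * (R - ε * (Dc * x ^ 2 + v) * v) := by
  have hε₀ : 0 < Dc - (α₂ + 2 * |a₂|) * (1 - σ) := by linarith
  have hβ : 0 < Dc * (σ * α₂ - α₁) := mul_pos hDc (by linarith)
  have hK : 0 ≤ Dc * |κ₁| + 4 * |κ₂| := by positivity
  have hdrift x (hx : x ≤ -1 / 2) v (hv : 0 ≤ v) :=
    drift_numerator_le (a₁ := a₁) (α₁ := α₁) hDc.le hσ₀ hσ₁ hε.le hx hv
  have hdiff x v (hv : 0 ≤ v) := diffusion_numerator_le (κ₁ := κ₁) (κ₂ := κ₂) hDc.le hσ₀ hσ₁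
    hδ₀ hδ₁ (by positivity : 0 ≤ Dc * x ^ 2) hv
  generalize Dc - (α₂ + 2 * |a₂|) * (1 - σ) = ε at hε₀ hdrift
  generalize Dc * (σ * α₂ - α₁) = β at hβ hdrift
  generalize Dc * |κ₁| + 4 * |κ₂| = K at hK hdiff
  obtain ⟨C, hC⟩ := exists_cubic_le_of_nonpos hβ (Dc * (|a₁| + |a₂|) + K * Dc + ε * Dc / 4)
  obtain ⟨R, hR⟩ := exists_mul_sub_sq_le (by positivity : 0 < ε / 4) (C + K)
  refine ⟨ε / 4, by positivity, R, by simpa using hR 0, fun x hx v hv => ?_⟩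
  have hv₀ : 0 ≤ v := by linarith
  -- the cubic bound absorbs every `x² v` term, the quadratic bound in `v` the remaining ones
  have hscalar : v * (Dc * x * (a₁ * x - α₁ * x ^ 2 + v)
        + (a₂ - α₂ * x) * (v - σ * (Dc * x ^ 2 + v)))
      + K * (Dc * x ^ 2 + v) + ε / 4 * (Dc * x ^ 2 + v) * v ≤ R := by
    nlinarith [mul_le_mul_of_nonneg_left (hdrift x hx v hv₀) hv₀,
      mul_le_mul_of_nonneg_left (hC x (by linarith)) hv₀, hR v,
      mul_nonneg (mul_nonneg hK (by positivity : 0 ≤ Dc * x ^ 2)) (by linarith : 0 ≤ v - 1)]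
  unfold phi3Numerator
  nlinarith [mul_le_mul_of_nonneg_left hscalar (by positivity : 0 ≤ Dc * x ^ 2 + v),
    hdiff x v hv₀]

section Bounds

variable {C₃ Dc σ δ : ℝ}

theorem phi3_nonneg (hC₃ : 0 ≤ C₃) (hDc : 0 ≤ Dc) (p : ℝ × ℝ) : 0 ≤ phi3 C₃ Dc σ δ p := by
  unfold phi3; positivity

theorem phi3_le_mul (hC₃ : 0 ≤ C₃) (hDc : 0 ≤ Dc) (hσ : 0 ≤ σ) (hδ₀ : 0 ≤ δ) (hδ₁ : δ ≤ 1)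
    {p : ℝ × ℝ} (hy : 1 ≤ |p.2|) :
    phi3 C₃ Dc σ δ p ≤ C₃ * ((Dc * p.1 ^ 2 + p.2 ^ 2) * p.2 ^ 2) := by
  have hv : 1 ≤ p.2 ^ 2 := by nlinarith [sq_abs p.2]
  have hu : 1 ≤ Dc * p.1 ^ 2 + p.2 ^ 2 := by nlinarith [mul_nonneg hDc (sq_nonneg p.1)]
  have hden : 1 ≤ |p.2| ^ (2 * σ) := one_le_rpow hy (by positivity)
  unfold phi3
  gcongr
  calc ((Dc * p.1 ^ 2 + p.2 ^ 2) / |p.2| ^ (2 * σ)) ^ δ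
      ≤ (Dc * p.1 ^ 2 + p.2 ^ 2) ^ δ := by
        gcongr; exact div_le_self (by positivity) hden
    _ ≤ (Dc * p.1 ^ 2 + p.2 ^ 2) ^ (1 : ℝ) := rpow_le_rpow_of_exponent_le hu hδ₁
    _ ≤ (Dc * p.1 ^ 2 + p.2 ^ 2) * p.2 ^ 2 := by
        rw [rpow_one]; exact le_mul_of_one_le_right (by positivity) hv

theorem mul_norm_rpow_le_phi3 (hC₃ : 0 ≤ C₃) (hDc : 1 ≤ Dc) (hσ₀ : 0 ≤ σ) (hσ₁ : σ ≤ 1)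
    (hδ : 0 ≤ δ) {p : ℝ × ℝ} (hy : p.2 ≠ 0) :
    C₃ * ‖p‖ ^ (2 * ((1 - σ) * δ)) ≤ phi3 C₃ Dc σ δ p := by
  set u := Dc * p.1 ^ 2 + p.2 ^ 2
  have hu : 0 < u := by positivity
  have hnorm : ‖p‖ ^ 2 ≤ u := by
    rw [Prod.norm_def, Real.norm_eq_abs, Real.norm_eq_abs]
    rcases max_choice |p.1| |p.2| with h | h <;> rw [h, sq_abs] <;>
      nlinarith [sq_nonneg p.1, sq_nonneg p.2]
  have hden : |p.2| ^ (2 * σ) ≤ u ^ σ := by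
    rw [rpow_mul (abs_nonneg _), rpow_two, sq_abs]
    gcongr
    nlinarith [sq_nonneg p.1]
  unfold phi3
  gcongr
  calc ‖p‖ ^ (2 * ((1 - σ) * δ)) = ((‖p‖ ^ 2) ^ (1 - σ)) ^ δ := by
        rw [← rpow_natCast, ← rpow_mul (norm_nonneg _), ← rpow_mul (by positivity)]
        norm_num [mul_assoc]
    _ ≤ (u ^ (1 - σ)) ^ δ := by gcongr
    _ = (u / u ^ σ) ^ δ := by rw [rpow_sub hu, rpow_one]
    _ ≤ (u / |p.2| ^ (2 * σ)) ^ δ := by gcongr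

end Bounds

theorem exists_lt_phi3_of_norm_gt {C₃ Dc σ δ : ℝ} (hC₃ : 0 < C₃) (hDc : 1 ≤ Dc) (hσ₀ : 0 ≤ σ)
    (hσ₁ : σ < 1) (hδ : 0 < δ) (M : ℝ) :
    ∃ R, ∀ z ∈ U3, R < ‖z‖ → M < phi3 C₃ Dc σ δ z := by
  have hlim : Tendsto (fun r : ℝ => C₃ * r ^ (2 * ((1 - σ) * δ))) atTop atTop :=
    (tendsto_rpow_atTop (by nlinarith)).const_mul_atTop hC₃
  obtain ⟨R, hR⟩ := eventually_atTop.1 (hlim.eventually_gt_atTop M)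
  refine ⟨R, fun z hz hRz => (hR ‖z‖ hRz.le).trans_le ?_⟩
  exact mul_norm_rpow_le_phi3 hC₃.le hDc hσ₀ hσ₁.le hδ.le (snd_ne_zero_of_mem_U3 hz)

theorem exists_Lop_phi3_le (a₁ a₂ κ₁ κ₂ : ℝ) {α₁ α₂ C₃ Dc σ δ : ℝ} (hC₃ : 0 < C₃)
    (hDc : 0 < Dc) (hα : α₁ < σ * α₂) (hσ₀ : 0 ≤ σ) (hσ₁ : σ ≤ 1) (hδ₀ : 0 < δ)
    (hδ₁ : δ ≤ 1)
    (hε : (α₂ + 2 * |a₂|) * (1 - σ) < Dc) :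
    ∃ C > 0, ∃ D > 0, ∀ z ∈ U3,
      Lop a₁ a₂ α₁ α₂ κ₁ κ₂ (phi3 C₃ Dc σ δ) z ≤ -C * phi3 C₃ Dc σ δ z + D := by
  obtain ⟨ε, hε₀, R, hR₀, hN⟩ :=
    exists_phi3Numerator_le a₁ a₂ κ₁ κ₂ hDc hα hσ₀ hσ₁ hδ₀.le hδ₁ hε
  refine ⟨2 * δ * ε, by positivity, 2 * δ * R * C₃ + 1, by positivity, ?_⟩
  rintro ⟨x, y⟩ hz
  have hy₀ : y ≠ 0 := snd_ne_zero_of_mem_U3 hz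
  obtain ⟨hx, hy⟩ := hz
  have hv : 1 ≤ y ^ 2 := by nlinarith [sq_abs y]
  set u := Dc * x ^ 2 + y ^ 2
  set φ := phi3 C₃ Dc σ δ (x, y)
  have hu : 0 < u := by positivity
  have hφle : φ / (u * y ^ 2) ≤ C₃ :=
    div_le_of_le_mul₀ (by positivity) hC₃.le (phi3_le_mul hC₃.le hDc.le hσ₀ hδ₀.le hδ₁ hy.le)
  have hratio : 2 * δ * phi3Numerator a₁ a₂ α₁ α₂ κ₁ κ₂ Dc σ δ x (y ^ 2) / (u ^ 2 * y ^ 2)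
      ≤ 2 * δ * (R - ε * u * y ^ 2) / (u * y ^ 2) := by
    rw [div_le_div_iff₀ (by positivity) (by positivity)]
    nlinarith [mul_le_mul_of_nonneg_left (hN x hx.le (y ^ 2) hv)
      (by positivity : 0 ≤ 2 * δ * (u * y ^ 2))]
  calc Lop a₁ a₂ α₁ α₂ κ₁ κ₂ (phi3 C₃ Dc σ δ) (x, y)
      = φ * (2 * δ * phi3Numerator a₁ a₂ α₁ α₂ κ₁ κ₂ Dc σ δ x (y ^ 2) / (u ^ 2 * y ^ 2)) :=
        Lop_phi3 a₁ a₂ α₁ α₂ κ₁ κ₂ C₃ hDc.le σ δ x hy₀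
    _ ≤ φ * (2 * δ * (R - ε * u * y ^ 2) / (u * y ^ 2)) :=
        mul_le_mul_of_nonneg_left hratio (phi3_nonneg hC₃.le hDc.le _)
    _ = -(2 * δ * ε) * φ + 2 * δ * R * (φ / (u * y ^ 2)) := by field_simp; ring
    _ ≤ -(2 * δ * ε) * φ + (2 * δ * R * C₃ + 1) := by
        have hδR : 0 ≤ 2 * δ * R := mul_nonneg (by positivity) hR₀
        linarith [mul_le_mul_of_nonneg_left hφle hδR]

/-- `φ₃` is a Lyapunov function on `U₃`. -/
theorem statement4 (a₁ a₂ α₁ α₂ κ₁ κ₂ σ δ Dc C₃ : ℝ)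
    (hα₁ : 0 < α₁) (hα : α₁ < α₂)
    (hσ₁ : α₁ / α₂ < σ) (hσ₂ : σ < 1) (hδ₁ : 0 < δ) (hδ₂ : δ < 1)
    (hD : max 1 ((α₂ + 2 * |a₂|) * (1 - σ)) < Dc) (hC₃ : 0 < C₃) :
    IsLyapunovOn a₁ a₂ α₁ α₂ κ₁ κ₂ (phi3 C₃ Dc σ δ) U3 := by
  have hα₂ : 0 < α₂ := hα₁.trans hα
  have hσ₀ : 0 < σ := (div_pos hα₁ hα₂).trans hσ₁
  have hDc : 1 < Dc := (le_max_left _ _).trans_lt hD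
  refine ⟨(contDiffOn_phi3 C₃ (by linarith) σ δ).mono fun z => snd_ne_zero_of_mem_U3,
    exists_lt_phi3_of_norm_gt hC₃ hDc.le hσ₀.le hσ₂ hδ₁,
    exists_Lop_phi3_le a₁ a₂ κ₁ κ₂ hC₃ (by linarith) ((div_lt_iff₀ hα₂).1 hσ₁) hσ₀.le hσ₂.le
      hδ₁ hδ₂.le ((le_max_right _ _).trans_lt hD)⟩
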